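/- arXiv:2503.14981 — 6 statements merged into one kernel-verified Lean document; each statement's English description precedes it below -/
import Mathlib

section
/- Let 𝔥 be a Euclidean space with spectral decomposition system (𝒳, S, γ, (Λ_a)_{a∈A}) and spectral-induced ordering mapping τ. Then: (i) τ is idempotent, τ ∘ τ = τ; (ii) ‖τ(x)‖ = ‖x‖ for all x ∈ 𝒳; (iii) ⟨x, y⟩ ≤ ⟨τ(x), τ(y)⟩ for all x, y ∈ 𝒳; and (iv) τ is nonexpansive: ‖τ(x) − τ(y)‖ ≤ ‖x − y‖ for all x, y ∈ 𝒳. -/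
open scoped InnerProductSpace

/-- A spectral decomposition system `(𝓧, S, γ, (Λ a)_{a ∈ A})` for a Euclidean space `𝓗`,
with spectral-induced ordering mapping `τ`. -/
structure SpectralDecompositionSystem
    (𝓗 : Type*) (𝓧 : Type*) [NormedAddCommGroup 𝓗] [InnerProductSpace ℝ 𝓗]
    [NormedAddCommGroup 𝓧] [InnerProductSpace ℝ 𝓧]
    (S : Type*) [Group S] [MulAction S 𝓧]
    {A : Type*} (γ : 𝓗 → 𝓧) (Λ : A → 𝓧 →ₗ[ℝ] 𝓗) (τ : 𝓧 → 𝓧) : Prop where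
  /-- `S` acts on `𝓧` by linear maps. -/
  smul_add_smul : ∀ (s : S) (c : ℝ) (x y : 𝓧), s • (c • x + y) = c • (s • x) + s • y
  /-- `S` acts on `𝓧` by isometries. -/
  norm_smul : ∀ (s : S) (x : 𝓧), ‖s • x‖ = ‖x‖
  /-- Each `Λ a` is a (linear) isometry. -/
  norm_lambda : ∀ (a : A) (x : 𝓧), ‖Λ a x‖ = ‖x‖
  /-- `τ` is `S`-invariant. -/
  tau_smul : ∀ (s : S) (x : 𝓧), τ (s • x) = τ x
  /-- `τ x` belongs to the orbit `S • x`. -/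
  tau_orbit : ∀ x : 𝓧, ∃ s : S, τ x = s • x
  /-- `γ ∘ Λ a = τ` for all `a ∈ A`. -/
  gamma_lambda : ∀ (a : A) (x : 𝓧), γ (Λ a x) = τ x
  /-- Every element of `𝓗` admits a spectral decomposition. -/
  exists_decomp : ∀ Z : 𝓗, ∃ a : A, Z = Λ a (γ Z)
  /-- Von Neumann-type trace inequality. -/
  inner_le : ∀ Z W : 𝓗, ⟪Z, W⟫_ℝ ≤ ⟪γ Z, γ W⟫_ℝ

variable {𝓗 𝓧 : Type*} [NormedAddCommGroup 𝓗] [InnerProductSpace ℝ 𝓗]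
  [FiniteDimensional ℝ 𝓗] [NormedAddCommGroup 𝓧] [InnerProductSpace ℝ 𝓧]
  [FiniteDimensional ℝ 𝓧] {S : Type*} [Group S] [MulAction S 𝓧]
  {A : Type*} [Nonempty A]

theorem norm_sub_le_norm_sub_of_norm_map_of_inner_le {E F : Type*}
    [NormedAddCommGroup E] [InnerProductSpace ℝ E] [NormedAddCommGroup F] [InnerProductSpace ℝ F]
    {f : E → F} (hnorm : ∀ x, ‖f x‖ = ‖x‖) (hinner : ∀ x y, ⟪x, y⟫_ℝ ≤ ⟪f x, f y⟫_ℝ) (x y : E) :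
    ‖f x - f y‖ ≤ ‖x - y‖ := by
  have hsq : ‖f x - f y‖ ^ 2 ≤ ‖x - y‖ ^ 2 := by
    rw [norm_sub_sq_real, norm_sub_sq_real, hnorm, hnorm]
    linarith [hinner x y]
  exact (sq_le_sq₀ (norm_nonneg _) (norm_nonneg _)).mp hsq

namespace SpectralDecompositionSystem

variable {H X : Type*} [NormedAddCommGroup H] [InnerProductSpace ℝ H]
  [NormedAddCommGroup X] [InnerProductSpace ℝ X] {S : Type*} [Group S] [MulAction S X]
  {A : Type*} {γ : H → X} {Λ : A → X →ₗ[ℝ] H} {τ : X → X}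

theorem norm_tau (hsys : SpectralDecompositionSystem H X S γ Λ τ) (x : X) : ‖τ x‖ = ‖x‖ := by
  obtain ⟨s, hs⟩ := hsys.tau_orbit x
  rw [hs, hsys.norm_smul]

theorem tau_tau (hsys : SpectralDecompositionSystem H X S γ Λ τ) (x : X) : τ (τ x) = τ x := by
  obtain ⟨s, hs⟩ := hsys.tau_orbit x
  calc τ (τ x) = τ (s • x) := by rw [hs]
    _ = τ x := hsys.tau_smul s x

def lambdaIsometry (hsys : SpectralDecompositionSystem H X S γ Λ τ) (a : A) : X →ₗᵢ[ℝ] H :=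
  ⟨Λ a, hsys.norm_lambda a⟩

theorem inner_le_inner_tau [Nonempty A] (hsys : SpectralDecompositionSystem H X S γ Λ τ)
    (x y : X) : ⟪x, y⟫_ℝ ≤ ⟪τ x, τ y⟫_ℝ := by
  obtain ⟨a⟩ := ‹Nonempty A›
  calc ⟪x, y⟫_ℝ = ⟪Λ a x, Λ a y⟫_ℝ := ((hsys.lambdaIsometry a).inner_map_map x y).symm
    _ ≤ ⟪γ (Λ a x), γ (Λ a y)⟫_ℝ := hsys.inner_le _ _
    _ = ⟪τ x, τ y⟫_ℝ := by rw [hsys.gamma_lambda, hsys.gamma_lambda]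

end SpectralDecompositionSystem

theorem spectral_ordering_basic_properties
    (γ : 𝓗 → 𝓧) (Λ : A → 𝓧 →ₗ[ℝ] 𝓗) (τ : 𝓧 → 𝓧)
    (hsys : SpectralDecompositionSystem 𝓗 𝓧 S γ Λ τ) :
    τ ∘ τ = τ ∧
    (∀ x : 𝓧, ‖τ x‖ = ‖x‖) ∧
    (∀ x y : 𝓧, ⟪x, y⟫_ℝ ≤ ⟪τ x, τ y⟫_ℝ) ∧
    (∀ x y : 𝓧, ‖τ x - τ y‖ ≤ ‖x - y‖) :=
  ⟨funext hsys.tau_tau, hsys.norm_tau, hsys.inner_le_inner_tau,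
    norm_sub_le_norm_sub_of_norm_map_of_inner_le hsys.norm_tau hsys.inner_le_inner_tau⟩
end

section
/- Let 𝔥 be a Euclidean space with spectral decomposition system (𝒳, S, γ, (Λ_a)_{a∈A}), and let 𝒟 be a nonempty subset of 𝔥. Then the following are equivalent: (i) ⟨X, Y⟩ = ⟨γ(X), γ(Y)⟩ for all X, Y ∈ 𝒟; (ii) ‖X − Y‖ = ‖γ(X) − γ(Y)‖ for all X, Y ∈ 𝒟; (iii) there exists a ∈ A such that X = Λ_a(γ(X)) for every X ∈ 𝒟. -/
open scoped InnerProductSpace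

variable {𝓗 𝓧 : Type*} [NormedAddCommGroup 𝓗] [InnerProductSpace ℝ 𝓗]
  [FiniteDimensional ℝ 𝓗] [NormedAddCommGroup 𝓧] [InnerProductSpace ℝ 𝓧]
  [FiniteDimensional ℝ 𝓧] {S : Type*} [Group S] [MulAction S 𝓧]
  {A : Type*} [Nonempty A]

/-!
For a finite family `F` attaining equality pairwise, the trace inequality and `‖γ Z‖ = ‖Z‖`
force `γ (∑ F) = ∑ γ Z`, so one decomposition `Λ a` of the sum decomposes every member of `F`.
A general `𝒟` reduces to a finite spanning subset `F ⊆ 𝒟`: `Λ a (γ Z) - Z` is orthogonal to `F`,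
hence to `Z ∈ span F`, and then `‖Λ a (γ Z)‖ = ‖Z‖` forces `Λ a (γ Z) = Z`.
The equivalence with (ii) is the polarization identity, again using `‖γ Z‖ = ‖Z‖`.
-/

namespace SpectralDecompositionSystem

variable {H X G ι : Type*} [NormedAddCommGroup H] [InnerProductSpace ℝ H]
  [NormedAddCommGroup X] [InnerProductSpace ℝ X] [Group G] [MulAction G X]
  {γ : H → X} {Λ : ι → X →ₗ[ℝ] H} {τ : X → X}

theorem inner_lambda (hsys : SpectralDecompositionSystem H X G γ Λ τ) (a : ι) (x y : X) :
    ⟪Λ a x, Λ a y⟫_ℝ = ⟪x, y⟫_ℝ :=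
  (⟨Λ a, hsys.norm_lambda a⟩ : X →ₗᵢ[ℝ] H).inner_map_map x y

theorem norm_gamma (hsys : SpectralDecompositionSystem H X G γ Λ τ) (Z : H) : ‖γ Z‖ = ‖Z‖ := by
  obtain ⟨a, ha⟩ := hsys.exists_decomp Z
  conv_rhs => rw [ha, hsys.norm_lambda]

theorem tau_gamma (hsys : SpectralDecompositionSystem H X G γ Λ τ) (Z : H) : τ (γ Z) = γ Z := by
  obtain ⟨a, ha⟩ := hsys.exists_decomp Z
  conv_rhs => rw [ha, hsys.gamma_lambda]

theorem gamma_lambda_gamma (hsys : SpectralDecompositionSystem H X G γ Λ τ) (a : ι) (Z : H) :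
    γ (Λ a (γ Z)) = γ Z := by
  rw [hsys.gamma_lambda, hsys.tau_gamma]

theorem inner_lambda_gamma_le (hsys : SpectralDecompositionSystem H X G γ Λ τ) (a : ι)
    (Z W : H) : ⟪Z, Λ a (γ W)⟫_ℝ ≤ ⟪γ Z, γ W⟫_ℝ :=
  (hsys.inner_le _ _).trans_eq (by rw [hsys.gamma_lambda_gamma])

theorem inner_eq_iff_norm_sub_eq (hsys : SpectralDecompositionSystem H X G γ Λ τ) (Z W : H) :
    ⟪Z, W⟫_ℝ = ⟪γ Z, γ W⟫_ℝ ↔ ‖Z - W‖ = ‖γ Z - γ W‖ := by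
  rw [← sq_eq_sq₀ (norm_nonneg _) (norm_nonneg _), norm_sub_sq_real, norm_sub_sq_real,
    hsys.norm_gamma, hsys.norm_gamma]
  constructor <;> intro h <;> linarith

theorem inner_gamma_eq_of_eq_lambda (hsys : SpectralDecompositionSystem H X G γ Λ τ) {a : ι}
    {Z W : H} (hZ : Z = Λ a (γ Z)) (hW : W = Λ a (γ W)) : ⟪Z, W⟫_ℝ = ⟪γ Z, γ W⟫_ℝ := by
  rw [← hsys.inner_lambda a, ← hZ, ← hW]

theorem eq_lambda_gamma_of_inner_eq_norm_sq (hsys : SpectralDecompositionSystem H X G γ Λ τ)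
    {a : ι} {Z : H} (h : ⟪Λ a (γ Z), Z⟫_ℝ = ‖Z‖ ^ 2) : Z = Λ a (γ Z) :=
  (eq_of_norm_le_re_inner_eq_norm_sq (by rw [hsys.norm_lambda, hsys.norm_gamma])
    (by rwa [RCLike.re_to_real])).symm

theorem gamma_sum (hsys : SpectralDecompositionSystem H X G γ Λ τ) {F : Finset H}
    (hF : ∀ Z ∈ F, ∀ W ∈ F, ⟪Z, W⟫_ℝ = ⟪γ Z, γ W⟫_ℝ) : γ (∑ Z ∈ F, Z) = ∑ Z ∈ F, γ Z := by
  set Y := ∑ Z ∈ F, Z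
  have hnorm : ‖∑ Z ∈ F, γ Z‖ = ‖Y‖ := by
    rw [← sq_eq_sq₀ (norm_nonneg _) (norm_nonneg _)]
    simp only [Y, ← real_inner_self_eq_norm_sq, sum_inner, inner_sum]
    exact Finset.sum_congr rfl fun Z hZ => Finset.sum_congr rfl fun W hW => (hF W hW Z hZ).symm
  have hge : ‖Y‖ ^ 2 ≤ ⟪γ Y, ∑ Z ∈ F, γ Z⟫_ℝ :=
    calc ‖Y‖ ^ 2 = ∑ Z ∈ F, ⟪Y, Z⟫_ℝ := by rw [← real_inner_self_eq_norm_sq, inner_sum]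
      _ ≤ ∑ Z ∈ F, ⟪γ Y, γ Z⟫_ℝ := Finset.sum_le_sum fun Z _ => hsys.inner_le Y Z
      _ = ⟪γ Y, ∑ Z ∈ F, γ Z⟫_ℝ := by rw [inner_sum]
  have hle : ⟪γ Y, ∑ Z ∈ F, γ Z⟫_ℝ ≤ ‖Y‖ ^ 2 :=
    calc ⟪γ Y, ∑ Z ∈ F, γ Z⟫_ℝ ≤ ‖γ Y‖ * ‖∑ Z ∈ F, γ Z‖ := real_inner_le_norm _ _
      _ = ‖Y‖ ^ 2 := by rw [hsys.norm_gamma, hnorm, sq]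
  refine eq_of_norm_le_re_inner_eq_norm_sq (𝕜 := ℝ) ?_ ?_
  · rw [hsys.norm_gamma, hnorm]
  · rw [RCLike.re_to_real, hnorm]
    exact le_antisymm hle hge

/-- A decomposition `Λ a` of `∑ W ∈ F, W` works for every `Z ∈ F`: by `gamma_sum`,
`∑ W ∈ F, ⟪Z, Λ a (γ W)⟫ = ∑ W ∈ F, ⟪Z, W⟫`, and the trace inequality bounds each term. -/
theorem exists_lambda_of_finset (hsys : SpectralDecompositionSystem H X G γ Λ τ) (F : Finset H)
    (hF : ∀ Z ∈ F, ∀ W ∈ F, ⟪Z, W⟫_ℝ = ⟪γ Z, γ W⟫_ℝ) : ∃ a : ι, ∀ Z ∈ F, Z = Λ a (γ Z) := by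
  obtain ⟨a, ha⟩ := hsys.exists_decomp (∑ Z ∈ F, Z)
  refine ⟨a, fun Z hZ => hsys.eq_lambda_gamma_of_inner_eq_norm_sq ?_⟩
  have hle : ∀ W ∈ F, ⟪Z, Λ a (γ W)⟫_ℝ ≤ ⟪Z, W⟫_ℝ := fun W hW =>
    (hsys.inner_lambda_gamma_le a Z W).trans_eq (hF Z hZ W hW).symm
  have hsum : ∑ W ∈ F, ⟪Z, Λ a (γ W)⟫_ℝ = ∑ W ∈ F, ⟪Z, W⟫_ℝ := by
    rw [← inner_sum, ← inner_sum, ← map_sum, ← hsys.gamma_sum hF, ← ha]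
  rw [real_inner_comm, (Finset.sum_eq_sum_iff_of_le hle).mp hsum Z hZ,
    real_inner_self_eq_norm_sq]

theorem eq_lambda_gamma_of_mem_span (hsys : SpectralDecompositionSystem H X G γ Λ τ) {a : ι}
    {s : Set H} (hs : ∀ W ∈ s, W = Λ a (γ W)) {Z : H} (hZs : ∀ W ∈ s, ⟪Z, W⟫_ℝ = ⟪γ Z, γ W⟫_ℝ)
    (hZ : Z ∈ Submodule.span ℝ s) : Z = Λ a (γ Z) := by
  have horth : s ⊆ LinearMap.ker (innerₛₗ ℝ (Λ a (γ Z) - Z)) := fun W hW => by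
    rw [SetLike.mem_coe, LinearMap.mem_ker, innerₛₗ_apply_apply, inner_sub_left, hZs W hW]
    conv_lhs => rw [hs W hW, hsys.inner_lambda, ← hs W hW]
    exact sub_self _
  have hZZ := LinearMap.mem_ker.mp (Submodule.span_le.mpr horth hZ)
  rw [innerₛₗ_apply_apply, inner_sub_left, sub_eq_zero, real_inner_self_eq_norm_sq] at hZZ
  exact hsys.eq_lambda_gamma_of_inner_eq_norm_sq hZZ

theorem exists_lambda_of_inner_eq [FiniteDimensional ℝ H]
    (hsys : SpectralDecompositionSystem H X G γ Λ τ) {𝒟 : Set H}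
    (h𝒟 : ∀ Z ∈ 𝒟, ∀ W ∈ 𝒟, ⟪Z, W⟫_ℝ = ⟪γ Z, γ W⟫_ℝ) : ∃ a : ι, ∀ Z ∈ 𝒟, Z = Λ a (γ Z) := by
  obtain ⟨b, hb𝒟, hspan, hind⟩ := exists_linearIndependent ℝ 𝒟
  have hbfin := hind.setFinite
  obtain ⟨a, ha⟩ := hsys.exists_lambda_of_finset hbfin.toFinset fun Z hZ W hW =>
    h𝒟 Z (hb𝒟 (hbfin.mem_toFinset.mp hZ)) W (hb𝒟 (hbfin.mem_toFinset.mp hW))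
  refine ⟨a, fun Z hZ => hsys.eq_lambda_gamma_of_mem_span (s := b)
    (fun W hW => ha W (hbfin.mem_toFinset.mpr hW)) (fun W hW => h𝒟 Z hZ W (hb𝒟 hW)) ?_⟩
  exact hspan ▸ Submodule.subset_span hZ

end SpectralDecompositionSystem

theorem equality_in_trace_inequality_tfae_general
    (γ : 𝓗 → 𝓧) (Λ : A → 𝓧 →ₗ[ℝ] 𝓗) (τ : 𝓧 → 𝓧)
    (hsys : SpectralDecompositionSystem 𝓗 𝓧 S γ Λ τ)
    (𝒟 : Set 𝓗) :
    ((∀ Z ∈ 𝒟, ∀ W ∈ 𝒟, ⟪Z, W⟫_ℝ = ⟪γ Z, γ W⟫_ℝ) ↔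
      (∀ Z ∈ 𝒟, ∀ W ∈ 𝒟, ‖Z - W‖ = ‖γ Z - γ W‖)) ∧
    ((∀ Z ∈ 𝒟, ∀ W ∈ 𝒟, ⟪Z, W⟫_ℝ = ⟪γ Z, γ W⟫_ℝ) ↔
      (∃ a : A, ∀ Z ∈ 𝒟, Z = Λ a (γ Z))) := by
  refine ⟨?_, hsys.exists_lambda_of_inner_eq, ?_⟩
  · simp only [hsys.inner_eq_iff_norm_sub_eq]
  · rintro ⟨a, ha⟩ Z hZ W hW
    exact hsys.inner_gamma_eq_of_eq_lambda (ha Z hZ) (ha W hW)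

theorem equality_in_trace_inequality_tfae
    (γ : 𝓗 → 𝓧) (Λ : A → 𝓧 →ₗ[ℝ] 𝓗) (τ : 𝓧 → 𝓧)
    (hsys : SpectralDecompositionSystem 𝓗 𝓧 S γ Λ τ)
    (𝒟 : Set 𝓗) (h𝒟 : 𝒟.Nonempty) :
    ((∀ Z ∈ 𝒟, ∀ W ∈ 𝒟, ⟪Z, W⟫_ℝ = ⟪γ Z, γ W⟫_ℝ) ↔
      (∀ Z ∈ 𝒟, ∀ W ∈ 𝒟, ‖Z - W‖ = ‖γ Z - γ W‖)) ∧
    ((∀ Z ∈ 𝒟, ∀ W ∈ 𝒟, ⟪Z, W⟫_ℝ = ⟪γ Z, γ W⟫_ℝ) ↔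
      (∃ a : A, ∀ Z ∈ 𝒟, Z = Λ a (γ Z))) :=
  equality_in_trace_inequality_tfae_general γ Λ τ hsys 𝒟
end

section
/- Let 𝔥 be a Euclidean space with spectral decomposition system (𝒳, S, γ, (Λ_a)_{a∈A}) and spectral-induced ordering mapping τ, and let x, y ∈ 𝒳. Then y belongs to the convex hull of the orbit S • x if and only if ⟨y, z⟩ ≤ ⟨τ(x), τ(z)⟩ for every z ∈ 𝒳. Moreover, if both x and y lie in the range of γ, these conditions are also equivalent to: ⟨y − x, z⟩ ≤ 0 for every z in the range of γ. -/
open scoped InnerProductSpace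

/-!
Transporting through any `Λ a` and applying the trace inequality gives
`⟪s • x, z⟫ ≤ ⟪τ x, τ z⟫` for every orbit point, so the convex hull of the orbit lies in all these
half-spaces. Conversely, for each `z` the bound is attained at some orbit point (move `x` and `z`
to `τ x` and `τ z` by one group element), so a point separated from the hull by some `z` violates
it. Separation needs the hull to be closed: the orbit is the sphere of radius `‖x‖` cut by the
half-spaces, hence compact, and by Carathéodory the convex hull of a compact set in finite
dimension is compact. On `range γ` the map `τ` is the identity and `τ z ∈ range γ`, which turns
the first condition into the second.
-/

open Module in
theorem convexHull_eq_biUnion_image_stdSimplex {E : Type*} [AddCommGroup E] [Module ℝ E]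
    [FiniteDimensional ℝ E] (K : Set E) :
    convexHull ℝ K = ⋃ k ∈ Set.Iic (finrank ℝ E + 1),
      (fun p : (Fin k → ℝ) × (Fin k → E) => ∑ i, p.1 i • p.2 i) ''
        (stdSimplex ℝ (Fin k) ×ˢ Set.univ.pi fun _ => K) := by
  refine subset_antisymm (fun x hx => ?_) ?_
  · obtain ⟨ι, _, z, w, hzK, hz, hw0, hw1, rfl⟩ := eq_pos_convex_span_of_mem_convexHull hx
    have hcard : Fintype.card ι ≤ finrank ℝ E + 1 :=
      hz.card_le_finrank_succ.trans (Nat.add_le_add_right (Submodule.finrank_le _) 1)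
    let e := (Fintype.equivFin ι).symm
    refine Set.mem_biUnion (x := Fintype.card ι) hcard ⟨(w ∘ e, z ∘ e), ⟨⟨?_, ?_⟩, ?_⟩, ?_⟩
    · exact fun i => (hw0 _).le
    · exact (e.sum_comp w).trans hw1
    · exact fun i _ => hzK ⟨e i, rfl⟩
    · exact e.sum_comp fun i => w i • z i
  · simp only [Set.iUnion_subset_iff, Set.image_subset_iff]
    rintro k - ⟨w, v⟩ ⟨⟨hw0, hw1⟩, hv⟩
    exact (convex_convexHull ℝ K).sum_mem (fun i _ => hw0 i) hw1
      (fun i _ => subset_convexHull ℝ K (hv i trivial))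

theorem IsCompact.convexHull {E : Type*} [NormedAddCommGroup E] [NormedSpace ℝ E]
    [FiniteDimensional ℝ E] {K : Set E} (hK : IsCompact K) : IsCompact (convexHull ℝ K) := by
  rw [convexHull_eq_biUnion_image_stdSimplex]
  refine (Set.finite_Iic _).isCompact_biUnion fun k _ => ?_
  exact ((isCompact_stdSimplex ℝ _).prod (isCompact_univ_pi fun _ => hK)).image <| by fun_prop

theorem exists_forall_inner_lt_of_notMem {E : Type*} [NormedAddCommGroup E]
    [InnerProductSpace ℝ E] [CompleteSpace E] {K : Set E} {y : E} (hconv : Convex ℝ K)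
    (hclosed : IsClosed K) (hy : y ∉ K) : ∃ z : E, ∀ k ∈ K, ⟪z, k⟫_ℝ < ⟪z, y⟫_ℝ := by
  obtain ⟨f, u, hfK, hfy⟩ := geometric_hahn_banach_closed_point hconv hclosed hy
  refine ⟨(InnerProductSpace.toDual ℝ E).symm f, fun k hk => ?_⟩
  simpa only [InnerProductSpace.toDual_symm_apply] using (hfK k hk).trans hfy

namespace SpectralDecompositionSystem

variable {𝓗 𝓧 : Type*} [NormedAddCommGroup 𝓗] [InnerProductSpace ℝ 𝓗]
  [NormedAddCommGroup 𝓧] [InnerProductSpace ℝ 𝓧] {S : Type*} [Group S] [MulAction S 𝓧]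
  {A : Type*} {γ : 𝓗 → 𝓧} {Λ : A → 𝓧 →ₗ[ℝ] 𝓗} {τ : 𝓧 → 𝓧}
  (hsys : SpectralDecompositionSystem 𝓗 𝓧 S γ Λ τ)

def smulLinearIsometry (s : S) : 𝓧 →ₗᵢ[ℝ] 𝓧 where
  toFun := (s • ·)
  map_add' u v := by simpa using hsys.smul_add_smul s 1 u v
  map_smul' c u := by
    have hs0 : s • (0 : 𝓧) = 0 := norm_eq_zero.mp <| (hsys.norm_smul s 0).trans norm_zero
    simpa [hs0] using hsys.smul_add_smul s c u 0
  norm_map' := hsys.norm_smul s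

def lambdaLinearIsometry (a : A) : 𝓧 →ₗᵢ[ℝ] 𝓗 :=
  { Λ a with norm_map' := hsys.norm_lambda a }

include hsys

theorem inner_smul_smul (s : S) (u v : 𝓧) : ⟪s • u, s • v⟫_ℝ = ⟪u, v⟫_ℝ :=
  (hsys.smulLinearIsometry s).inner_map_map u v

theorem norm_tau_s6 (u : 𝓧) : ‖τ u‖ = ‖u‖ := by
  obtain ⟨s, hs⟩ := hsys.tau_orbit u
  rw [hs, hsys.norm_smul]

theorem orbit_tau (u : 𝓧) : MulAction.orbit S (τ u) = MulAction.orbit S u :=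
  MulAction.orbit_eq_iff.mpr <| (hsys.tau_orbit u).imp fun _ h => h.symm

theorem inner_le_inner_tau_s6 [Nonempty A] (u v : 𝓧) : ⟪u, v⟫_ℝ ≤ ⟪τ u, τ v⟫_ℝ := by
  obtain ⟨a⟩ := ‹Nonempty A›
  calc ⟪u, v⟫_ℝ = ⟪Λ a u, Λ a v⟫_ℝ := ((hsys.lambdaLinearIsometry a).inner_map_map u v).symm
    _ ≤ ⟪γ (Λ a u), γ (Λ a v)⟫_ℝ := hsys.inner_le _ _
    _ = ⟪τ u, τ v⟫_ℝ := by rw [hsys.gamma_lambda, hsys.gamma_lambda]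

theorem inner_smul_le_inner_tau [Nonempty A] (s : S) (x z : 𝓧) :
    ⟪s • x, z⟫_ℝ ≤ ⟪τ x, τ z⟫_ℝ :=
  hsys.tau_smul s x ▸ hsys.inner_le_inner_tau_s6 (s • x) z

theorem exists_inner_smul_eq_inner_tau (x z : 𝓧) : ∃ s : S, ⟪s • x, z⟫_ℝ = ⟪τ x, τ z⟫_ℝ := by
  obtain ⟨s, hz⟩ := hsys.tau_orbit z
  obtain ⟨t, hx⟩ := hsys.tau_orbit x
  refine ⟨s⁻¹ * t, ?_⟩
  rw [← hsys.inner_smul_smul s, smul_smul, mul_inv_cancel_left, ← hx, ← hz]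

theorem tau_eq_of_mem_range {u : 𝓧} (hu : u ∈ Set.range γ) : τ u = u := by
  obtain ⟨X, rfl⟩ := hu
  obtain ⟨a, ha⟩ := hsys.exists_decomp X
  rw [← hsys.gamma_lambda a, ← ha]

theorem tau_mem_range [Nonempty A] (u : 𝓧) : τ u ∈ Set.range γ := by
  obtain ⟨a⟩ := ‹Nonempty A›
  exact ⟨Λ a u, hsys.gamma_lambda a u⟩

theorem tau_eq_of_norm_eq_of_forall_inner_le {x y : 𝓧} (hnorm : ‖y‖ = ‖x‖)
    (hle : ∀ z, ⟪y, z⟫_ℝ ≤ ⟪τ x, τ z⟫_ℝ) : τ y = τ x := by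
  have hdist : ‖τ x - τ y‖ ^ 2 ≤ 0 := by
    rw [norm_sub_sq_real, hsys.norm_tau_s6, hsys.norm_tau_s6, hnorm]
    have := hle y
    rw [real_inner_self_eq_norm_sq, hnorm] at this
    linarith
  rw [eq_comm, ← sub_eq_zero, ← norm_eq_zero]
  exact pow_eq_zero_iff two_ne_zero |>.mp (hdist.antisymm (sq_nonneg _))

theorem orbit_eq_sphere_inter [Nonempty A] (x : 𝓧) :
    MulAction.orbit S x = Metric.sphere 0 ‖x‖ ∩ {y | ∀ z, ⟪y, z⟫_ℝ ≤ ⟪τ x, τ z⟫_ℝ} := by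
  ext y
  simp only [Set.mem_inter_iff, mem_sphere_zero_iff_norm, Set.mem_ofPred_eq]
  constructor
  · rintro ⟨s, rfl⟩
    exact ⟨hsys.norm_smul s x, hsys.inner_smul_le_inner_tau s x⟩
  · rintro ⟨hnorm, hle⟩
    rw [← hsys.orbit_tau, ← hsys.tau_eq_of_norm_eq_of_forall_inner_le hnorm hle, hsys.orbit_tau]
    exact MulAction.mem_orbit_self y

theorem isCompact_orbit [Nonempty A] [FiniteDimensional ℝ 𝓧] (x : 𝓧) :
    IsCompact (MulAction.orbit S x) := by
  rw [hsys.orbit_eq_sphere_inter]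
  refine (isCompact_sphere 0 ‖x‖).inter_right ?_
  simp only [Set.ofPred_forall]
  exact isClosed_iInter fun z => isClosed_le (by fun_prop) continuous_const

theorem mem_convexHull_orbit_iff [Nonempty A] [FiniteDimensional ℝ 𝓧] (x y : 𝓧) :
    y ∈ convexHull ℝ (MulAction.orbit S x) ↔ ∀ z, ⟪y, z⟫_ℝ ≤ ⟪τ x, τ z⟫_ℝ := by
  refine ⟨fun hy z => ?_, fun hy => ?_⟩
  · refine convexHull_min (t := {w | ⟪w, z⟫_ℝ ≤ ⟪τ x, τ z⟫_ℝ}) ?_ ?_ hy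
    · rintro _ ⟨s, rfl⟩
      exact hsys.inner_smul_le_inner_tau s x z
    · exact convex_halfSpace_le
        ⟨fun u v => inner_add_left u v z, fun c u => real_inner_smul_left u z c⟩ _
  · by_contra hy'
    obtain ⟨z, hz⟩ := exists_forall_inner_lt_of_notMem (convex_convexHull ℝ _)
      (hsys.isCompact_orbit x).convexHull.isClosed hy'
    obtain ⟨s, hs⟩ := hsys.exists_inner_smul_eq_inner_tau x z
    have := hz (s • x) (subset_convexHull ℝ _ (MulAction.mem_orbit x s))
    linarith [hy z, real_inner_comm z y, real_inner_comm z (s • x)]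

theorem forall_inner_le_iff_of_mem_range [Nonempty A] {x y : 𝓧} (hx : x ∈ Set.range γ)
    (hy : y ∈ Set.range γ) :
    (∀ z, ⟪y, z⟫_ℝ ≤ ⟪τ x, τ z⟫_ℝ) ↔ ∀ z ∈ Set.range γ, ⟪y - x, z⟫_ℝ ≤ 0 := by
  simp only [inner_sub_left, sub_nonpos]
  refine ⟨fun h z hz => ?_, fun h z => ?_⟩
  · simpa only [hsys.tau_eq_of_mem_range hx, hsys.tau_eq_of_mem_range hz] using h z
  · calc ⟪y, z⟫_ℝ ≤ ⟪τ y, τ z⟫_ℝ := hsys.inner_le_inner_tau_s6 y z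
      _ ≤ ⟪τ x, τ z⟫_ℝ := by
        rw [hsys.tau_eq_of_mem_range hx, hsys.tau_eq_of_mem_range hy]
        exact h _ (hsys.tau_mem_range z)

end SpectralDecompositionSystem

variable {𝓗 𝓧 : Type*} [NormedAddCommGroup 𝓗] [InnerProductSpace ℝ 𝓗]
  [FiniteDimensional ℝ 𝓗] [NormedAddCommGroup 𝓧] [InnerProductSpace ℝ 𝓧]
  [FiniteDimensional ℝ 𝓧] {S : Type*} [Group S] [MulAction S 𝓧]
  {A : Type*} [Nonempty A]

theorem mem_convexHull_orbit_characterization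
    (γ : 𝓗 → 𝓧) (Λ : A → 𝓧 →ₗ[ℝ] 𝓗) (τ : 𝓧 → 𝓧)
    (hsys : SpectralDecompositionSystem 𝓗 𝓧 S γ Λ τ)
    (x y : 𝓧) :
    (y ∈ convexHull ℝ (MulAction.orbit S x) ↔
      ∀ z : 𝓧, ⟪y, z⟫_ℝ ≤ ⟪τ x, τ z⟫_ℝ) ∧
    (x ∈ Set.range γ → y ∈ Set.range γ →
      (y ∈ convexHull ℝ (MulAction.orbit S x) ↔
        ∀ z ∈ Set.range γ, ⟪y - x, z⟫_ℝ ≤ 0)) :=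
  ⟨hsys.mem_convexHull_orbit_iff x y, fun hx hy =>
    (hsys.mem_convexHull_orbit_iff x y).trans (hsys.forall_inner_le_iff_of_mem_range hx hy)⟩
end

section
/- Let 𝔥 be a Euclidean space with spectral decomposition system (𝒳, S, γ, (Λ_a)_{a∈A}), and let Φ : 𝔥 → [−∞, +∞]. Then the following are equivalent: (i) Φ is a spectral function, i.e., for all X, Y ∈ 𝔥, γ(X) = γ(Y) implies Φ(X) = Φ(Y); (ii) Φ ∘ Λ_a = Φ ∘ Λ_b for all a, b ∈ A; (iii) there exists an S-invariant function φ : 𝒳 → [−∞, +∞] (meaning φ(s • x) = φ(x) for all s ∈ S, x ∈ 𝒳) such that Φ = φ ∘ γ. Moreover, if (iii) holds, then φ = Φ ∘ Λ_a for every a ∈ A (in particular φ is unique). -/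
/-! Since `Λ a (γ Z) = Z` and `γ ∘ Λ a = τ`, the map `τ` fixes the image of `γ`, so `Λ a` is a
section of `γ` over it; and `τ x` lies in the `S`-orbit of `x`. Hence `φ ↦ φ ∘ γ` and
`Φ ↦ Φ ∘ Λ a` are mutually inverse between `S`-invariant functions on `𝓧` and functions of `γ`. -/

open scoped InnerProductSpace

def IsSpectralFunction {𝓗 𝓧 β : Type*} (γ : 𝓗 → 𝓧) (Φ : 𝓗 → β) : Prop :=
  ∀ Z W : 𝓗, γ Z = γ W → Φ Z = Φ W

theorem IsSpectralFunction.comp_gamma {𝓗 𝓧 β : Type*} (γ : 𝓗 → 𝓧) (φ : 𝓧 → β) :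
    IsSpectralFunction γ (φ ∘ γ) := fun _ _ h => congrArg φ h

namespace SpectralDecompositionSystem

variable {𝓗 𝓧 : Type*} [NormedAddCommGroup 𝓗] [InnerProductSpace ℝ 𝓗]
  [NormedAddCommGroup 𝓧] [InnerProductSpace ℝ 𝓧] {S : Type*} [Group S] [MulAction S 𝓧]
  {A β : Type*} {γ : 𝓗 → 𝓧} {Λ : A → 𝓧 →ₗ[ℝ] 𝓗} {τ : 𝓧 → 𝓧}
  (hsys : SpectralDecompositionSystem 𝓗 𝓧 S γ Λ τ)
include hsys

theorem tau_gamma_s8 (Z : 𝓗) : τ (γ Z) = γ Z := by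
  obtain ⟨a, ha⟩ := hsys.exists_decomp Z
  calc τ (γ Z) = γ (Λ a (γ Z)) := (hsys.gamma_lambda a _).symm
    _ = γ Z := by rw [← ha]

theorem gamma_lambda_smul (a : A) (s : S) (x : 𝓧) : γ (Λ a (s • x)) = γ (Λ a x) := by
  rw [hsys.gamma_lambda, hsys.gamma_lambda, hsys.tau_smul]

theorem isSpectralFunction_iff_comp_lambda_eq {Φ : 𝓗 → β} :
    IsSpectralFunction γ Φ ↔ ∀ a b : A, (fun x => Φ (Λ a x)) = fun x => Φ (Λ b x) := by
  constructor
  · intro hΦ a b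
    funext x
    exact hΦ _ _ (by rw [hsys.gamma_lambda, hsys.gamma_lambda])
  · intro hΦ Z W hZW
    obtain ⟨a, ha⟩ := hsys.exists_decomp Z
    obtain ⟨b, hb⟩ := hsys.exists_decomp W
    rw [ha, hb, ← hZW]
    exact congrFun (hΦ a b) (γ Z)

theorem comp_lambda_smul_of_isSpectralFunction {Φ : 𝓗 → β} (hΦ : IsSpectralFunction γ Φ)
    (a : A) (s : S) (x : 𝓧) : Φ (Λ a (s • x)) = Φ (Λ a x) :=
  hΦ _ _ (hsys.gamma_lambda_smul a s x)

theorem eq_comp_lambda_comp_gamma_of_isSpectralFunction {Φ : 𝓗 → β}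
    (hΦ : IsSpectralFunction γ Φ) (a : A) : Φ = (fun x => Φ (Λ a x)) ∘ γ := by
  funext Z
  exact hΦ _ _ (by rw [hsys.gamma_lambda, hsys.tau_gamma_s8])

theorem eq_comp_lambda_of_eq_comp_gamma {φ : 𝓧 → β} (hφ : ∀ (s : S) (x : 𝓧), φ (s • x) = φ x)
    {Φ : 𝓗 → β} (hΦ : Φ = φ ∘ γ) (a : A) : φ = fun x => Φ (Λ a x) := by
  funext x
  obtain ⟨s, hs⟩ := hsys.tau_orbit x
  rw [hΦ, Function.comp_apply, hsys.gamma_lambda, hs, hφ]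

end SpectralDecompositionSystem

variable {𝓗 𝓧 : Type*} [NormedAddCommGroup 𝓗] [InnerProductSpace ℝ 𝓗]
  [FiniteDimensional ℝ 𝓗] [NormedAddCommGroup 𝓧] [InnerProductSpace ℝ 𝓧]
  [FiniteDimensional ℝ 𝓧] {S : Type*} [Group S] [MulAction S 𝓧]
  {A : Type*} [Nonempty A]

theorem spectral_function_characterization
    (γ : 𝓗 → 𝓧) (Λ : A → 𝓧 →ₗ[ℝ] 𝓗) (τ : 𝓧 → 𝓧)
    (hsys : SpectralDecompositionSystem 𝓗 𝓧 S γ Λ τ)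
    (Φ : 𝓗 → EReal) :
    ((∀ Z W : 𝓗, γ Z = γ W → Φ Z = Φ W) ↔
      (∀ a b : A, (fun x => Φ (Λ a x)) = fun x => Φ (Λ b x))) ∧
    ((∀ Z W : 𝓗, γ Z = γ W → Φ Z = Φ W) ↔
      (∃ φ : 𝓧 → EReal, (∀ (s : S) (x : 𝓧), φ (s • x) = φ x) ∧ Φ = φ ∘ γ)) ∧
    (∀ φ : 𝓧 → EReal, (∀ (s : S) (x : 𝓧), φ (s • x) = φ x) → Φ = φ ∘ γ →
      ∀ a : A, φ = fun x => Φ (Λ a x)) := by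
  obtain ⟨a⟩ := ‹Nonempty A›
  refine ⟨hsys.isSpectralFunction_iff_comp_lambda_eq, ⟨fun hΦ => ?_, ?_⟩,
    fun φ hφ hΦ => hsys.eq_comp_lambda_of_eq_comp_gamma hφ hΦ⟩
  · exact ⟨_, hsys.comp_lambda_smul_of_isSpectralFunction hΦ a,
      hsys.eq_comp_lambda_comp_gamma_of_isSpectralFunction hΦ a⟩
  · rintro ⟨φ, -, rfl⟩
    exact IsSpectralFunction.comp_gamma γ φ
end

section
/- Let 𝔥 be a Euclidean space with spectral decomposition system (𝒳, S, γ, (Λ_a)_{a∈A}), and let φ : 𝒳 → [−∞, +∞] be S-invariant (φ(s • x) = φ(x) for all s ∈ S, x ∈ 𝒳). Then: (i) for every X ∈ 𝔥, the function φ ∘ γ is lower semicontinuous at X if and only if φ is lower semicontinuous at γ(X); and (ii) φ ∘ γ is lower semicontinuous on 𝔥 if and only if φ is lower semicontinuous on 𝒳. -/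
/-!
Comparing `‖γ Z - γ W‖²` with `‖Z - W‖²` via `‖γ Z‖ = ‖Z‖` and the trace inequality shows that `γ`
is 1-Lipschitz, so lower semicontinuity of `φ` passes to `φ ∘ γ`. Conversely each isometry `Λ a` is
continuous and `φ ∘ γ ∘ Λ a = φ ∘ τ = φ` by invariance, so `φ` is recovered from `φ ∘ γ` by a
continuous substitution; at a point, choose `a` with `Z = Λ a (γ Z)`.
-/

open scoped InnerProductSpace

section ComposeLowerSemicontinuous

variable {X Y β : Type*} [TopologicalSpace X] [TopologicalSpace Y] [Preorder β]
  {φ : X → β} {p : Y → X} {q : X → Y}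

theorem lowerSemicontinuousAt_comp_iff_of_section {y : Y} (hp : ContinuousAt p y)
    (hq : ContinuousAt q (p y)) (hqp : q (p y) = y) (hφ : ∀ x, φ (p (q x)) = φ x) :
    LowerSemicontinuousAt (φ ∘ p) y ↔ LowerSemicontinuousAt φ (p y) := by
  refine ⟨fun h => ?_, fun h => h.comp hp⟩
  have hcomp : LowerSemicontinuousAt (φ ∘ p ∘ q) (p y) := (hqp ▸ h).comp hq
  rwa [show φ ∘ p ∘ q = φ from funext hφ] at hcomp

theorem lowerSemicontinuous_comp_iff_of_section (hp : Continuous p) (hq : Continuous q)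
    (hφ : ∀ x, φ (p (q x)) = φ x) :
    LowerSemicontinuous (φ ∘ p) ↔ LowerSemicontinuous φ := by
  refine ⟨fun h => ?_, fun h => h.comp hp⟩
  rw [← show φ ∘ p ∘ q = φ from funext hφ]
  exact h.comp hq

end ComposeLowerSemicontinuous

namespace SpectralDecompositionSystem

variable {𝓗 𝓧 : Type*} [NormedAddCommGroup 𝓗] [InnerProductSpace ℝ 𝓗]
  [NormedAddCommGroup 𝓧] [InnerProductSpace ℝ 𝓧] {S : Type*} [Group S] [MulAction S 𝓧]
  {A : Type*} {γ : 𝓗 → 𝓧} {Λ : A → 𝓧 →ₗ[ℝ] 𝓗} {τ : 𝓧 → 𝓧}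
  (hsys : SpectralDecompositionSystem 𝓗 𝓧 S γ Λ τ)
include hsys

theorem norm_gamma_s9 (Z : 𝓗) : ‖γ Z‖ = ‖Z‖ := by
  obtain ⟨a, ha⟩ := hsys.exists_decomp Z
  conv_rhs => rw [ha, hsys.norm_lambda]

theorem lipschitzWith_gamma : LipschitzWith 1 γ := by
  refine LipschitzWith.of_dist_le_mul fun Z W => ?_
  rw [dist_eq_norm, dist_eq_norm, NNReal.coe_one, one_mul]
  have hsq : ‖γ Z - γ W‖ ^ 2 ≤ ‖Z - W‖ ^ 2 := by
    rw [norm_sub_sq_real, norm_sub_sq_real, hsys.norm_gamma_s9, hsys.norm_gamma_s9]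
    linarith [hsys.inner_le Z W]
  exact le_of_sq_le_sq hsq (norm_nonneg _)

theorem continuous_gamma : Continuous γ :=
  hsys.lipschitzWith_gamma.continuous

theorem continuous_lambda (a : A) : Continuous (Λ a) :=
  (⟨Λ a, hsys.norm_lambda a⟩ : 𝓧 →ₗᵢ[ℝ] 𝓗).continuous

theorem apply_gamma_lambda {β : Type*} {φ : 𝓧 → β} (hφ : ∀ (s : S) (x : 𝓧), φ (s • x) = φ x)
    (a : A) (x : 𝓧) : φ (γ (Λ a x)) = φ x := by
  obtain ⟨s, hs⟩ := hsys.tau_orbit x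
  rw [hsys.gamma_lambda, hs, hφ]

end SpectralDecompositionSystem

variable {𝓗 𝓧 : Type*} [NormedAddCommGroup 𝓗] [InnerProductSpace ℝ 𝓗]
  [FiniteDimensional ℝ 𝓗] [NormedAddCommGroup 𝓧] [InnerProductSpace ℝ 𝓧]
  [FiniteDimensional ℝ 𝓧] {S : Type*} [Group S] [MulAction S 𝓧]
  {A : Type*} [Nonempty A]

theorem spectral_function_lowerSemicontinuous_iff
    (γ : 𝓗 → 𝓧) (Λ : A → 𝓧 →ₗ[ℝ] 𝓗) (τ : 𝓧 → 𝓧)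
    (hsys : SpectralDecompositionSystem 𝓗 𝓧 S γ Λ τ)
    (φ : 𝓧 → EReal) (hφ : ∀ (s : S) (x : 𝓧), φ (s • x) = φ x) :
    (∀ Z : 𝓗, LowerSemicontinuousAt (fun W => φ (γ W)) Z ↔
      LowerSemicontinuousAt φ (γ Z)) ∧
    (LowerSemicontinuous (fun W => φ (γ W)) ↔ LowerSemicontinuous φ) := by
  refine ⟨fun Z => ?_, ?_⟩
  · obtain ⟨a, ha⟩ := hsys.exists_decomp Z
    exact lowerSemicontinuousAt_comp_iff_of_section hsys.continuous_gamma.continuousAt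
      (hsys.continuous_lambda a).continuousAt ha.symm (hsys.apply_gamma_lambda hφ a)
  · exact lowerSemicontinuous_comp_iff_of_section hsys.continuous_gamma
      (hsys.continuous_lambda (Classical.arbitrary A)) (hsys.apply_gamma_lambda hφ _)
end

section
/- (Reduced minimization principle, infimum form.) Let 𝔥 be a Euclidean space with spectral decomposition system (𝒳, S, γ, (Λ_a)_{a∈A}), let φ : 𝒳 → (−∞, +∞] be proper (not identically +∞) and S-invariant (φ(s • x) = φ(x) for all s ∈ S, x ∈ 𝒳), and let Y ∈ 𝔥. Then inf_{X ∈ 𝔥} ( φ(γ(X)) − ⟨X, Y⟩ ) = inf_{x ∈ 𝒳} ( φ(x) − ⟨x, γ(Y)⟩ ), where both infima are taken in [−∞, +∞]. -/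
open scoped InnerProductSpace

variable {𝓗 𝓧 : Type*} [NormedAddCommGroup 𝓗] [InnerProductSpace ℝ 𝓗]
  [FiniteDimensional ℝ 𝓗] [NormedAddCommGroup 𝓧] [InnerProductSpace ℝ 𝓧]
  [FiniteDimensional ℝ 𝓧] {S : Type*} [Group S] [MulAction S 𝓧]
  {A : Type*} [Nonempty A]

namespace SpectralDecompositionSystem

variable {E V G ι : Type*} [NormedAddCommGroup E] [InnerProductSpace ℝ E]
  [NormedAddCommGroup V] [InnerProductSpace ℝ V] [Group G] [MulAction G V]
  {γ : E → V} {Λ : ι → V →ₗ[ℝ] E} {τ : V → V}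

theorem inner_lambda_lambda (hsys : SpectralDecompositionSystem E V G γ Λ τ) (a : ι)
    (x y : V) : ⟪Λ a x, Λ a y⟫_ℝ = ⟪x, y⟫_ℝ :=
  (⟨Λ a, hsys.norm_lambda a⟩ : V →ₗᵢ[ℝ] E).inner_map_map x y

theorem apply_tau_of_smul_invariant {β : Type*}
    (hsys : SpectralDecompositionSystem E V G γ Λ τ) {φ : V → β}
    (hφ : ∀ (s : G) (x : V), φ (s • x) = φ x) (x : V) : φ (τ x) = φ x := by
  obtain ⟨s, hs⟩ := hsys.tau_orbit x
  rw [hs, hφ]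

theorem apply_gamma_lambda_of_smul_invariant {β : Type*}
    (hsys : SpectralDecompositionSystem E V G γ Λ τ) {φ : V → β}
    (hφ : ∀ (s : G) (x : V), φ (s • x) = φ x) (a : ι) (x : V) : φ (γ (Λ a x)) = φ x := by
  rw [hsys.gamma_lambda, hsys.apply_tau_of_smul_invariant hφ]

end SpectralDecompositionSystem

theorem reduced_minimization_inf_general
    (γ : 𝓗 → 𝓧) (Λ : A → 𝓧 →ₗ[ℝ] 𝓗) (τ : 𝓧 → 𝓧)
    (hsys : SpectralDecompositionSystem 𝓗 𝓧 S γ Λ τ)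
    (φ : 𝓧 → EReal)
    (hφ : ∀ (s : S) (x : 𝓧), φ (s • x) = φ x) (Y : 𝓗) :
    ⨅ Z : 𝓗, (φ (γ Z) - ((⟪Z, Y⟫_ℝ : ℝ) : EReal)) =
      ⨅ x : 𝓧, (φ x - ((⟪x, γ Y⟫_ℝ : ℝ) : EReal)) := by
  obtain ⟨a, ha⟩ := hsys.exists_decomp Y
  refine le_antisymm (iInf_mono' fun x => ⟨Λ a x, le_of_eq ?_⟩)
    (iInf_mono' fun Z => ⟨γ Z, ?_⟩)
  · rw [hsys.apply_gamma_lambda_of_smul_invariant hφ, ← hsys.inner_lambda_lambda a x (γ Y), ← ha]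
  · exact EReal.sub_le_sub le_rfl (EReal.coe_le_coe_iff.mpr (hsys.inner_le Z Y))

/-- Reduced minimization principle, infimum form. -/
theorem reduced_minimization_inf
    (γ : 𝓗 → 𝓧) (Λ : A → 𝓧 →ₗ[ℝ] 𝓗) (τ : 𝓧 → 𝓧)
    (hsys : SpectralDecompositionSystem 𝓗 𝓧 S γ Λ τ)
    (φ : 𝓧 → EReal) (hproper : ∃ x, φ x ≠ ⊤) (hbot : ∀ x, φ x ≠ ⊥)
    (hφ : ∀ (s : S) (x : 𝓧), φ (s • x) = φ x) (Y : 𝓗) :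
    ⨅ Z : 𝓗, (φ (γ Z) - ((⟪Z, Y⟫_ℝ : ℝ) : EReal)) =
      ⨅ x : 𝓧, (φ x - ((⟪x, γ Y⟫_ℝ : ℝ) : EReal)) :=
  reduced_minimization_inf_general γ Λ τ hsys φ hφ Y
end
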